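/- Let ρ ∈ (0,1) and A₂(ρ) = [[-ρ², ρ√(2(1-ρ²)), 1-ρ²],[ρ√(2(1-ρ²)), 2ρ²-1, ρ√(2(1-ρ²))],[1-ρ², ρ√(2(1-ρ²)), -ρ²]]. For any function φ : ℤ → ℂ not identically zero, Ψ(x) = (φ(x), (ρ/√(2(1-ρ²)))(φ(x)+φ(x-1)), φ(x-1)) satisfies U_{A₂(ρ)}Ψ = Ψ, giving the stationary measure μ(x) = ((2-ρ²)/(2(1-ρ²)))(|φ(x)|² + |φ(x-1)|²) + (ρ²/(1-ρ²))·Re(φ(x)·conj(φ(x-1))). -/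

import Mathlib

open Complex Matrix Finset

noncomputable def walk (A : Matrix (Fin 3) (Fin 3) ℂ) (Ψ : ℤ → Fin 3 → ℂ) : ℤ → Fin 3 → ℂ :=
  fun x => ![∑ j, A 0 j * Ψ (x + 1) j, ∑ j, A 1 j * Ψ x j, ∑ j, A 2 j * Ψ (x - 1) j]

noncomputable def A₂ (ρ : ℝ) : Matrix (Fin 3) (Fin 3) ℂ :=
  !![(-ρ ^ 2 : ℝ), (ρ * Real.sqrt (2 * (1 - ρ ^ 2)) : ℝ), ((1 - ρ ^ 2 : ℝ) : ℂ);
    (ρ * Real.sqrt (2 * (1 - ρ ^ 2)) : ℝ), ((2 * ρ ^ 2 - 1 : ℝ) : ℂ), (ρ * Real.sqrt (2 * (1 - ρ ^ 2)) : ℝ);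
    ((1 - ρ ^ 2 : ℝ) : ℂ), (ρ * Real.sqrt (2 * (1 - ρ ^ 2)) : ℝ), (-ρ ^ 2 : ℝ)]

/-! For a coin `[[-r, c, 1-r], [c, 2r-1, c], [1-r, c, -r]]` and the state
`(φ x, a (φ x + φ (x - 1)), φ (x - 1))`, the outer components of `U Ψ = Ψ` reduce to `c a = r` and
the middle one to `c + (2r - 1) a = a`, i.e. `c = 2 (1 - r) a`. For `A₂(ρ)` with
`s = √(2(1-ρ²))` one has `r = ρ²`, `c = ρ s`, `a = ρ / s`, and both hold because `s² = 2(1-ρ²)`.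
The formula for `μ` is the expansion of `|φ x + φ (x - 1)|²`. -/

def type2State (a : ℂ) (φ : ℤ → ℂ) : ℤ → Fin 3 → ℂ :=
  fun x => ![φ x, a * (φ x + φ (x - 1)), φ (x - 1)]

theorem walk_type2State_eq_self {r c a : ℂ} (hca : c * a = r) (hc : c = 2 * (1 - r) * a)
    (φ : ℤ → ℂ) :
    walk !![-r, c, 1 - r; c, 2 * r - 1, c; 1 - r, c, -r] (type2State a φ) = type2State a φ := by
  funext x i
  fin_cases i <;>
    simp only [walk, type2State, Fin.isValue, of_apply, cons_val', cons_val_fin_one, cons_val_zero,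
      cons_val_one, Matrix.cons_val, Fin.zero_eta, Fin.mk_one, Fin.reduceFinMk,
      add_sub_cancel_right, Fin.sum_univ_three, neg_mul]
  · linear_combination (φ (x + 1) + φ x) * hca
  · linear_combination (φ x + φ (x - 1)) * hc
  · linear_combination (φ (x - 1) + φ (x - 1 - 1)) * hca

theorem walk_A₂_type2State_eq_self {ρ : ℝ} (hρ : ρ ^ 2 < 1) (φ : ℤ → ℂ) :
    walk (A₂ ρ) (type2State ((ρ / Real.sqrt (2 * (1 - ρ ^ 2)) : ℝ) : ℂ) φ)
      = type2State ((ρ / Real.sqrt (2 * (1 - ρ ^ 2)) : ℝ) : ℂ) φ := by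
  set s := Real.sqrt (2 * (1 - ρ ^ 2)) with hs
  have hs2 : (s : ℂ) ^ 2 = 2 * (1 - (ρ : ℂ) ^ 2) := by
    exact_mod_cast Real.sq_sqrt (by linarith : (0 : ℝ) ≤ 2 * (1 - ρ ^ 2))
  have hs0 : (s : ℂ) ≠ 0 := ofReal_ne_zero.mpr (Real.sqrt_pos.mpr (by linarith)).ne'
  have hA₂ : A₂ ρ = !![-((ρ : ℂ) ^ 2), (ρ * s : ℂ), 1 - (ρ : ℂ) ^ 2; (ρ * s : ℂ),
      2 * (ρ : ℂ) ^ 2 - 1, (ρ * s : ℂ); 1 - (ρ : ℂ) ^ 2, (ρ * s : ℂ), -((ρ : ℂ) ^ 2)] := by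
    ext i j; fin_cases i <;> fin_cases j <;> simp [A₂, ← hs]
  rw [hA₂]
  refine walk_type2State_eq_self ?_ ?_ φ
  · push_cast; field_simp
  · push_cast; field_simp; linear_combination (ρ : ℂ) * hs2

theorem sum_norm_sq_type2State (a : ℝ) (φ : ℤ → ℂ) (x : ℤ) :
    ∑ i, ‖type2State a φ x i‖ ^ 2 = (1 + a ^ 2) * (‖φ x‖ ^ 2 + ‖φ (x - 1)‖ ^ 2)
      + 2 * a ^ 2 * (φ x * (starRingEnd ℂ) (φ (x - 1))).re := by
  have hadd := normSq_add (φ x) (φ (x - 1))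
  simp only [normSq_eq_norm_sq] at hadd
  simp only [type2State, Fin.sum_univ_three, cons_val_zero, cons_val_one, cons_val_two,
    head_cons, tail_cons, norm_mul, mul_pow, norm_real, Real.norm_eq_abs, sq_abs, hadd]
  ring

theorem A₂_type2_stationary_general (ρ : ℝ) (hρ : ρ ∈ Set.Ioo (0 : ℝ) 1)
    (φ : ℤ → ℂ)
    (Ψ : ℤ → Fin 3 → ℂ)
    (hΨ : Ψ = fun x => ![φ x,
      ((ρ / Real.sqrt (2 * (1 - ρ ^ 2)) : ℝ) : ℂ) * (φ x + φ (x - 1)), φ (x - 1)]) :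
    walk (A₂ ρ) Ψ = Ψ ∧
    ∀ x : ℤ, ∑ i, ‖Ψ x i‖ ^ 2 =
      (2 - ρ ^ 2) / (2 * (1 - ρ ^ 2)) * (‖φ x‖ ^ 2 + ‖φ (x - 1)‖ ^ 2)
      + ρ ^ 2 / (1 - ρ ^ 2) * (φ x * (starRingEnd ℂ) (φ (x - 1))).re := by
  have hρ_sq : ρ ^ 2 < 1 := by nlinarith [hρ.1, hρ.2]
  have hΨ' : Ψ = type2State ((ρ / Real.sqrt (2 * (1 - ρ ^ 2)) : ℝ) : ℂ) φ := hΨ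
  refine ⟨hΨ' ▸ walk_A₂_type2State_eq_self hρ_sq φ, fun x => ?_⟩
  have ha : (ρ / Real.sqrt (2 * (1 - ρ ^ 2))) ^ 2 = ρ ^ 2 / (2 * (1 - ρ ^ 2)) := by
    rw [div_pow, Real.sq_sqrt (by linarith)]
  have hρ_ne : 1 - ρ ^ 2 ≠ 0 := by linarith
  rw [hΨ', sum_norm_sq_type2State, ha]
  field_simp
  ring

theorem A₂_type2_stationary (ρ : ℝ) (hρ : ρ ∈ Set.Ioo (0 : ℝ) 1)
    (φ : ℤ → ℂ) (hφ : ∃ x, φ x ≠ 0)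
    (Ψ : ℤ → Fin 3 → ℂ)
    (hΨ : Ψ = fun x => ![φ x,
      ((ρ / Real.sqrt (2 * (1 - ρ ^ 2)) : ℝ) : ℂ) * (φ x + φ (x - 1)), φ (x - 1)]) :
    walk (A₂ ρ) Ψ = Ψ ∧
    ∀ x : ℤ, ∑ i, ‖Ψ x i‖ ^ 2 =
      (2 - ρ ^ 2) / (2 * (1 - ρ ^ 2)) * (‖φ x‖ ^ 2 + ‖φ (x - 1)‖ ^ 2)
      + ρ ^ 2 / (1 - ρ ^ 2) * (φ x * (starRingEnd ℂ) (φ (x - 1))).re :=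
  A₂_type2_stationary_general ρ hρ φ Ψ hΨ
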